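/- Under assumptions (B1)–(B6), the family {l_t} satisfies: (1) Σ_{t=0}^∞ (L^t p^{l_0})(K,z) < ∞ for all compact K ⊆ X and z ∈ Z, where p^{l_0}(K,z) = p_{K,z}(l_0) and L is the Bellman COP (Lp)(K,z) = β ∫_Z max_{x∈K} p(Γ(x,z'),z') Q_z(dz'); (2) the function R₀[Γ](x,z) := R₀(Γ(x,z), z) belongs to ℒ¹(Z; C(X)) and p^{l_0} + L R₀ ≤ R₀ pointwise, where R₀(K,z) = Σ_{t=0}^∞ p_{K,z}(l_t). -/

import Mathlib

open MeasureTheory Filter Topology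

noncomputable section

abbrev Euc (n : ℕ) : Type := EuclideanSpace ℝ (Fin n)

def Cara {X : Type*} [TopologicalSpace X] {Z : Type*} [MeasurableSpace Z]
    (f : X → Z → ℝ) : Prop :=
  (∀ x, Measurable (f x)) ∧ (∀ z, Continuous fun x => f x z)

/-- Upper hemicontinuity of a correspondence. -/
def UHC {α β : Type*} [TopologicalSpace α] [TopologicalSpace β] (G : α → Set β) : Prop :=
  ∀ a, ∀ V : Set β, IsOpen V → G a ⊆ V → ∀ᶠ a' in nhds a, G a' ⊆ V

/-- Lower hemicontinuity of a correspondence. -/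
def LHC {α β : Type*} [TopologicalSpace α] [TopologicalSpace β] (G : α → Set β) : Prop :=
  ∀ a, ∀ V : Set β, IsOpen V → (G a ∩ V).Nonempty → ∀ᶠ a' in nhds a, (G a' ∩ V).Nonempty

def MemL1C {l k : ℕ} (X : Set (Euc l)) (Z : Set (Euc k)) (Q : Z → Measure Z)
    (f : X → Z → ℝ) : Prop :=
  Cara f ∧ ∀ K : Set X, IsCompact K → ∀ z : Z,
    Integrable (fun z' => ⨆ x : K, |f x z'|) (Q z)

def pKz {l k : ℕ} {X : Set (Euc l)} {Z : Set (Euc k)} (Q : Z → Measure Z)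
    (K : Set X) (z : Z) (f : X → Z → ℝ) : ℝ :=
  ∫ z', (⨆ x : K, |f x z'|) ∂(Q z)


/-!
Write `q_t(x, z) = p_{Γ(x,z),z}(l_t)`. Since `l_t ≥ 0`, the recursion in (B6) says exactly
`β q_t ≤ l_{t+1}`. Induction on `t` then gives `L^t p^{l₀} ≤ p^{l_t}`, whence (1).

For (2), `q_t` is Carathéodory: continuity in `x` comes from Berge's maximum theorem and dominated
convergence, the dominating functions being sups over the compact set `⋃_{x ∈ S} Γ(x, z)` for
compact `S`; measurability in `z` from joint measurability of Carathéodory functions. The bound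
`β ⨆_{x∈K} R₀[Γ](x, z') ≤ Σ_t ⨆_{x∈K} l_{t+1}(x, z')`, whose right side is integrable with
integral `Σ_{t≥1} p^{l_t}(K, z)`, yields both the integrability and `L R₀ ≤ R₀ - p^{l₀}`.
-/

open Set

section Hemicontinuity

variable {α γ : Type*} [TopologicalSpace α] [TopologicalSpace γ] {G : α → Set γ}

lemma UHC.comp_continuous {δ : Type*} [TopologicalSpace δ] (hG : UHC G) {g : δ → α}
    (hg : Continuous g) : UHC (G ∘ g) :=
  fun d V hV hsub => (hg.tendsto d).eventually (hG (g d) V hV hsub)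

lemma LHC.comp_continuous {δ : Type*} [TopologicalSpace δ] (hG : LHC G) {g : δ → α}
    (hg : Continuous g) : LHC (G ∘ g) :=
  fun d V hV hne => (hg.tendsto d).eventually (hG (g d) V hV hne)

lemma UHC.isCompact_biUnion (hG : UHC G) (hc : ∀ a, IsCompact (G a)) {S : Set α}
    (hS : IsCompact S) : IsCompact (⋃ a ∈ S, G a) := by
  classical
  refine isCompact_of_finite_subcover fun U hUo hcov => ?_
  have hfin : ∀ a ∈ S, ∃ t : Finset _, G a ⊆ ⋃ i ∈ t, U i := fun a ha =>
    (hc a).elim_finite_subcover U hUo ((subset_biUnion_of_mem ha).trans hcov)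
  choose! t ht using hfin
  -- by upper hemicontinuity, the finite subcover of `G a` also covers `G a'` for `a'` near `a`
  obtain ⟨s, -, hcover⟩ := hS.elim_nhds_subcover (fun a => {a' | G a' ⊆ ⋃ i ∈ t a, U i})
    fun a ha => hG a _ (isOpen_biUnion fun i _ => hUo i) (ht a ha)
  refine ⟨s.biUnion t, iUnion₂_subset fun a ha y hy => ?_⟩
  obtain ⟨b, hbs, hab⟩ := mem_iUnion₂.1 (hcover ha)
  obtain ⟨i, hi, hyi⟩ := mem_iUnion₂.1 (hab hy)
  exact mem_iUnion₂.2 ⟨i, Finset.mem_biUnion.2 ⟨b, hbs, hi⟩, hyi⟩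

lemma IsCompact.bddAbove_range_restrict {s : Set γ} (hs : IsCompact s) {f : γ → ℝ}
    (hf : ContinuousOn f s) : BddAbove (range fun y : s => f y) :=
  image_eq_range f s ▸ hs.bddAbove_image hf

lemma LHC.lowerSemicontinuous_iSup (hG : LHC G) (hne : ∀ a, (G a).Nonempty)
    (hc : ∀ a, IsCompact (G a)) {f : γ → ℝ} (hf : Continuous f) :
    LowerSemicontinuous fun a => ⨆ y : G a, f y := by
  intro a r hr
  have := (hne a).to_subtype
  obtain ⟨⟨y, hy⟩, hry⟩ := exists_lt_of_lt_ciSup hr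
  filter_upwards [hG a _ (isOpen_Ioi.preimage hf) ⟨y, hy, hry⟩] with a' ⟨y', hy', hry'⟩
  exact lt_of_lt_of_le hry' (le_ciSup ((hc a').bddAbove_range_restrict hf.continuousOn) ⟨y', hy'⟩)

lemma UHC.upperSemicontinuous_iSup (hG : UHC G) (hne : ∀ a, (G a).Nonempty)
    (hc : ∀ a, IsCompact (G a)) {f : γ → ℝ} (hf : Continuous f) :
    UpperSemicontinuous fun a => ⨆ y : G a, f y := by
  intro a r hr
  have hsub : G a ⊆ f ⁻¹' Iio r := fun y hy =>
    (le_ciSup ((hc a).bddAbove_range_restrict hf.continuousOn) ⟨y, hy⟩).trans_lt hr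
  filter_upwards [hG a _ (isOpen_Iio.preimage hf) hsub] with a' ha'
  have := (hne a').to_subtype
  obtain ⟨y, hy, hmax⟩ := (hc a').exists_isMaxOn (hne a') hf.continuousOn
  exact (ciSup_le fun y' => isMaxOn_iff.1 hmax _ y'.2).trans_lt (ha' hy)

/-- Berge's maximum theorem. -/
lemma continuous_iSup_of_uhc_of_lhc (hu : UHC G) (hl : LHC G) (hne : ∀ a, (G a).Nonempty)
    (hc : ∀ a, IsCompact (G a)) {f : γ → ℝ} (hf : Continuous f) :
    Continuous fun a => ⨆ y : G a, f y :=
  continuous_iff_lower_upperSemicontinuous.2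
    ⟨hl.lowerSemicontinuous_iSup hne hc hf, hu.upperSemicontinuous_iSup hne hc hf⟩

end Hemicontinuity

lemma Real.iSup_subtype_mono_of_nonneg {γ : Type*} {f : γ → ℝ} {s t : Set γ} (hst : s ⊆ t)
    (hf : ∀ y, 0 ≤ f y) (hb : BddAbove (range fun y : t => f y)) :
    ⨆ y : s, f y ≤ ⨆ y : t, f y :=
  Real.iSup_le (fun y => le_ciSup hb ⟨y, hst y.2⟩) (Real.iSup_nonneg fun y => hf y)

lemma continuous_of_continuousOn_isCompact {α γ : Type*} [TopologicalSpace α]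
    [TopologicalSpace γ] [CompactlyCoherentSpace α] {f : α → γ}
    (h : ∀ K, IsCompact K → ContinuousOn f K) : Continuous f :=
  CompactlyCoherentSpace.isCoherentWith.continuous_iff.2 h

lemma measurable_iSup_of_continuous {ι γ : Type*} [TopologicalSpace ι]
    [TopologicalSpace.SeparableSpace ι] [MeasurableSpace γ] {f : ι → γ → ℝ}
    (hc : ∀ z, Continuous fun i => f i z) (hm : ∀ i, Measurable (f i)) :
    Measurable fun z => ⨆ i, f i z := by
  obtain ⟨D, hDc, hD⟩ := TopologicalSpace.exists_countable_dense ι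
  have := hDc.to_subtype
  simp_rw [← hD.ciSup' (hc _)]
  exact Measurable.iSup fun i => hm i

section NonnegSeries

variable {γ : Type*} [MeasurableSpace γ] {μ : Measure γ} {h : ℕ → γ → ℝ}

lemma lintegral_tsum_ofReal_ne_top (hi : ∀ t, Integrable (h t) μ) (h0 : ∀ t z, 0 ≤ h t z)
    (hs : Summable fun t => ∫ z, h t z ∂μ) : ∫⁻ z, ∑' t, ENNReal.ofReal (h t z) ∂μ ≠ ⊤ := by
  rw [lintegral_tsum fun t => (hi t).aemeasurable.ennreal_ofReal]
  have hofReal : ∀ t, ∫⁻ z, ENNReal.ofReal (h t z) ∂μ = ENNReal.ofReal (∫ z, h t z ∂μ) :=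
    fun t => (ofReal_integral_eq_lintegral_ofReal (hi t) (ae_of_all _ (h0 t))).symm
  rw [tsum_congr hofReal, ← ENNReal.ofReal_tsum_of_nonneg (fun t => integral_nonneg (h0 t)) hs]
  exact ENNReal.ofReal_ne_top

lemma integrable_tsum_of_nonneg (hi : ∀ t, Integrable (h t) μ) (h0 : ∀ t z, 0 ≤ h t z)
    (hs : Summable fun t => ∫ z, h t z ∂μ) : Integrable (fun z => ∑' t, h t z) μ := by
  refine (integrable_toReal_of_lintegral_ne_top
    (AEMeasurable.tsum fun t => (hi t).aemeasurable.ennreal_ofReal)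
    (lintegral_tsum_ofReal_ne_top hi h0 hs)).congr (ae_of_all _ fun z => ?_)
  simp only [ENNReal.tsum_toReal_eq fun t => ENNReal.ofReal_ne_top, ENNReal.toReal_ofReal (h0 _ z)]

lemma ae_summable_of_nonneg (hi : ∀ t, Integrable (h t) μ) (h0 : ∀ t z, 0 ≤ h t z)
    (hs : Summable fun t => ∫ z, h t z ∂μ) : ∀ᵐ z ∂μ, Summable fun t => h t z := by
  filter_upwards [ae_lt_top' (AEMeasurable.tsum fun t =>
    (hi t).aemeasurable.ennreal_ofReal) (lintegral_tsum_ofReal_ne_top hi h0 hs)] with z hz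
  exact (ENNReal.summable_toReal hz.ne).congr fun t => ENNReal.toReal_ofReal (h0 t z)

lemma integral_tsum_of_nonneg (hi : ∀ t, Integrable (h t) μ) (h0 : ∀ t z, 0 ≤ h t z)
    (hs : Summable fun t => ∫ z, h t z ∂μ) : ∫ z, ∑' t, h t z ∂μ = ∑' t, ∫ z, h t z ∂μ := by
  refine (integral_tsum_of_summable_integral_norm hi ?_).symm
  simpa only [Real.norm_of_nonneg (h0 _ _)] using hs

end NonnegSeries

lemma MeasureTheory.Measure.measurable_of_measurable_toReal {α γ : Type*} [MeasurableSpace α]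
    [MeasurableSpace γ] {Q : γ → Measure α} [∀ b, IsFiniteMeasure (Q b)]
    (h : ∀ s, MeasurableSet s → Measurable fun b => (Q b s).toReal) : Measurable Q :=
  Measure.measurable_of_measurable_coe _ fun s hs => by
    simpa only [ENNReal.ofReal_toReal (measure_ne_top _ s)] using (h s hs).ennreal_ofReal

section Seminorms

variable {l k : ℕ} {X : Set (Euc l)} {Z : Set (Euc k)} {Q : Z → Measure Z}

lemma pKz_nonneg (K : Set X) (z : Z) (f : X → Z → ℝ) : 0 ≤ pKz Q K z f :=
  integral_nonneg fun _ => Real.iSup_nonneg fun _ => abs_nonneg _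

lemma pKz_eq_integral_iSup {f : X → Z → ℝ} (hf : ∀ x z, 0 ≤ f x z) (K : Set X) (z : Z) :
    pKz Q K z f = ∫ z', ⨆ x : K, f x z' ∂(Q z) := by
  simp only [pKz, abs_of_nonneg (hf _ _)]

lemma Cara.bddAbove_abs {f : X → Z → ℝ} (hf : Cara f) {K : Set X} (hK : IsCompact K) (z : Z) :
    BddAbove (range fun x : K => |f x z|) :=
  hK.bddAbove_range_restrict (continuous_abs.comp (hf.2 z)).continuousOn

lemma pKz_mono {f : X → Z → ℝ} (hf : MemL1C X Z Q f) {K₁ K₂ : Set X} (h : K₁ ⊆ K₂)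
    (hK₂ : IsCompact K₂) (z : Z) : pKz Q K₁ z f ≤ pKz Q K₂ z f :=
  integral_mono_of_nonneg (ae_of_all _ fun _ => Real.iSup_nonneg fun _ => abs_nonneg _)
    (hf.2 K₂ hK₂ z) (ae_of_all _ fun z' =>
      Real.iSup_subtype_mono_of_nonneg (f := fun x => |f x z'|) h (fun _ => abs_nonneg _)
        (hf.1.bddAbove_abs hK₂ z'))

lemma measurable_pKz_of_uhc_of_lhc [∀ z, IsProbabilityMeasure (Q z)] (hQ : Measurable Q)
    {G : Z → Set X} (hu : UHC G) (hl : LHC G) (hne : ∀ z, (G z).Nonempty)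
    (hc : ∀ z, IsCompact (G z)) {f : X → Z → ℝ} (hf : Cara f) :
    Measurable fun z => pKz Q (G z) z f := by
  let κ : ProbabilityTheory.Kernel Z Z := ⟨Q, hQ⟩
  have : ProbabilityTheory.IsMarkovKernel κ := ⟨inferInstance⟩
  have hjoint : Measurable (Function.uncurry fun z z' => ⨆ y : G z, |f y z'|) :=
    measurable_uncurry_of_continuous_of_measurable
      (fun z' => continuous_iSup_of_uhc_of_lhc hu hl hne hc (continuous_abs.comp (hf.2 z')))
      (fun z => measurable_iSup_of_continuous
        (fun z' => continuous_abs.comp ((hf.2 z').comp continuous_subtype_val))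
        (fun y => (hf.1 y).abs))
  exact (hjoint.stronglyMeasurable.integral_kernel_prod_right' (κ := κ)).measurable

variable {α : Type*} [TopologicalSpace α] [FirstCountableTopology α] {G : α → Set X}

lemma continuous_pKz_of_uhc_of_lhc (hu : UHC G) (hl : LHC G) (hne : ∀ a, (G a).Nonempty)
    (hc : ∀ a, IsCompact (G a)) {f : X → Z → ℝ} (hf : MemL1C X Z Q f) (z : Z) :
    Continuous fun a => pKz Q (G a) z f := by
  refine continuous_of_continuousOn_isCompact fun S hS => ?_
  have hSc := hu.isCompact_biUnion hc hS
  refine continuousOn_of_dominated (F := fun a z' => ⨆ y : G a, |f y z'|)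
    (bound := fun z' => ⨆ y : ⋃ a ∈ S, G a, |f y z'|)
    (fun a _ => (measurable_iSup_of_continuous (f := fun (y : G a) z' => |f y z'|)
      (fun z' => continuous_abs.comp ((hf.1.2 z').comp continuous_subtype_val))
      (fun y => (hf.1.1 y).abs)).aestronglyMeasurable)
    (fun a ha => ae_of_all _ fun z' => ?_) (hf.2 _ hSc z)
    (ae_of_all _ fun z' =>
      (continuous_iSup_of_uhc_of_lhc hu hl hne hc (continuous_abs.comp (hf.1.2 z'))).continuousOn)
  rw [Real.norm_of_nonneg (Real.iSup_nonneg fun _ => abs_nonneg _)]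
  exact Real.iSup_subtype_mono_of_nonneg (f := fun y => |f y z'|) (subset_biUnion_of_mem ha)
    (fun _ => abs_nonneg _) (hf.1.bddAbove_abs hSc z')

lemma continuous_tsum_pKz_of_uhc_of_lhc (hu : UHC G) (hl : LHC G) (hne : ∀ a, (G a).Nonempty)
    (hc : ∀ a, IsCompact (G a)) {f : ℕ → X → Z → ℝ} (hf : ∀ t, MemL1C X Z Q (f t))
    (hs : ∀ K : Set X, IsCompact K → ∀ z, Summable fun t => pKz Q K z (f t)) (z : Z) :
    Continuous fun a => ∑' t, pKz Q (G a) z (f t) := by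
  refine continuous_of_continuousOn_isCompact fun S hS => ?_
  have hSc := hu.isCompact_biUnion hc hS
  refine continuousOn_tsum
    (fun t => (continuous_pKz_of_uhc_of_lhc hu hl hne hc (hf t) z).continuousOn) (hs _ hSc z)
    fun t a ha => ?_
  rw [Real.norm_of_nonneg (pKz_nonneg _ _ _)]
  exact pKz_mono (hf t) (subset_biUnion_of_mem ha) hSc z

lemma cara_tsum_pKz_comp [∀ z, IsProbabilityMeasure (Q z)] (hQ : Measurable Q)
    {Γ : X × Z → Set X} (hu : UHC Γ) (hl : LHC Γ) (hne : ∀ p, (Γ p).Nonempty)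
    (hc : ∀ p, IsCompact (Γ p)) {f : ℕ → X → Z → ℝ} (hf : ∀ t, MemL1C X Z Q (f t))
    (hs : ∀ K : Set X, IsCompact K → ∀ z, Summable fun t => pKz Q K z (f t)) :
    Cara fun x z => ∑' t, pKz Q (Γ (x, z)) z (f t) := by
  have hx (x : X) : Continuous fun z : Z => (x, z) := continuous_const.prodMk continuous_id
  have hz (z : Z) : Continuous fun x : X => (x, z) := continuous_id.prodMk continuous_const
  exact ⟨fun x => Measurable.tsum fun t => measurable_pKz_of_uhc_of_lhc hQ
      (hu.comp_continuous (hx x)) (hl.comp_continuous (hx x)) (fun _ => hne _) (fun _ => hc _)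
      (hf t).1,
    fun z => continuous_tsum_pKz_of_uhc_of_lhc (hu.comp_continuous (hz z))
      (hl.comp_continuous (hz z)) (fun _ => hne _) (fun _ => hc _) hf hs z⟩

end Seminorms

section Bellman

variable {l k : ℕ} {X : Set (Euc l)} {Z : Set (Euc k)} {Q : Z → Measure Z} {β : ℝ}
  {Γ : X × Z → Set X}

def bellmanOp (β : ℝ) (Q : Z → Measure Z) (Γ : X × Z → Set X) (p : Set X → Z → ℝ) :
    Set X → Z → ℝ :=
  fun K z => β * ∫ z', (⨆ x : K, p (Γ (x, z')) z') ∂(Q z)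

lemma bellmanOp_iterate_nonneg (hβ : 0 ≤ β) {p : Set X → Z → ℝ} (hp : ∀ K z, 0 ≤ p K z)
    (t : ℕ) : ∀ K z, 0 ≤ (bellmanOp β Q Γ)^[t] p K z := by
  induction t with
  | zero => exact hp
  | succ t ih =>
    intro K z
    rw [Function.iterate_succ_apply']
    exact mul_nonneg hβ (integral_nonneg fun z' => Real.iSup_nonneg fun x => ih _ _)

lemma bellmanOp_le_pKz (hβ : 0 ≤ β) (hΓc : ∀ p, IsCompact (Γ p)) {p : Set X → Z → ℝ}
    (hp : ∀ K z, 0 ≤ p K z) {f g : X → Z → ℝ} (hg : MemL1C X Z Q g)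
    (hpf : ∀ K, IsCompact K → ∀ z, p K z ≤ pKz Q K z f)
    (hrec : ∀ x z, β * pKz Q (Γ (x, z)) z f ≤ g x z) {K : Set X} (hK : IsCompact K) (z : Z) :
    bellmanOp β Q Γ p K z ≤ pKz Q K z g := by
  rw [bellmanOp, pKz, ← integral_const_mul]
  refine integral_mono_of_nonneg
    (ae_of_all _ fun z' => mul_nonneg hβ (Real.iSup_nonneg fun x => hp _ _)) (hg.2 K hK z)
    (ae_of_all _ fun z' => ?_)
  dsimp only
  rw [Real.mul_iSup_of_nonneg hβ]
  exact ciSup_mono (hg.1.bddAbove_abs hK z') fun x =>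
    (mul_le_mul_of_nonneg_left (hpf _ (hΓc _) z') hβ).trans ((hrec x z').trans (le_abs_self _))

variable {f : ℕ → X → Z → ℝ}

lemma bellmanOp_iterate_le_pKz (hβ : 0 ≤ β) (hΓc : ∀ p, IsCompact (Γ p))
    (hf : ∀ t, MemL1C X Z Q (f t))
    (hrec : ∀ t x z, β * pKz Q (Γ (x, z)) z (f t) ≤ f (t + 1) x z) (t : ℕ) :
    ∀ K, IsCompact K → ∀ z,
      (bellmanOp β Q Γ)^[t] (fun K z => pKz Q K z (f 0)) K z ≤ pKz Q K z (f t) := by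
  induction t with
  | zero => exact fun K _ z => le_rfl
  | succ t ih =>
    intro K hK z
    rw [Function.iterate_succ_apply']
    exact bellmanOp_le_pKz hβ hΓc (bellmanOp_iterate_nonneg hβ (fun _ _ => pKz_nonneg _ _ _) t)
      (hf (t + 1)) ih (hrec t) hK z

lemma iSup_tsum_pKz_le (hβ : 0 < β) (hΓc : ∀ p, IsCompact (Γ p))
    (hf : ∀ t, MemL1C X Z Q (f t)) (hs : ∀ K, IsCompact K → ∀ z, Summable fun t => pKz Q K z (f t))
    (hrec : ∀ t x z, β * pKz Q (Γ (x, z)) z (f t) ≤ f (t + 1) x z) {K : Set X} (hK : IsCompact K)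
    {z : Z} (hsz : Summable fun t => ⨆ x : K, |f (t + 1) x z|) :
    ⨆ x : K, ∑' t, pKz Q (Γ (x, z)) z (f t) ≤ β⁻¹ * ∑' t, ⨆ x : K, |f (t + 1) x z| := by
  refine Real.iSup_le (fun x => ?_) (mul_nonneg (inv_nonneg.2 hβ.le)
    (tsum_nonneg fun t => Real.iSup_nonneg fun _ => abs_nonneg _))
  rw [← tsum_mul_left]
  refine (hs _ (hΓc _) z).tsum_le_tsum (fun t => ?_) (hsz.mul_left _)
  rw [le_inv_mul_iff₀ hβ]
  exact (hrec t x z).trans ((le_abs_self _).trans (le_ciSup ((hf (t + 1)).1.bddAbove_abs hK z) x))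

lemma integrable_and_ae_iSup_tsum_pKz_le (hβ : 0 < β) (hΓc : ∀ p, IsCompact (Γ p))
    (hf : ∀ t, MemL1C X Z Q (f t)) (hs : ∀ K, IsCompact K → ∀ z, Summable fun t => pKz Q K z (f t))
    (hrec : ∀ t x z, β * pKz Q (Γ (x, z)) z (f t) ≤ f (t + 1) x z) {K : Set X} (hK : IsCompact K)
    (z : Z) :
    Integrable (fun z' => ∑' t, ⨆ x : K, |f (t + 1) x z'|) (Q z) ∧
      ∀ᵐ z' ∂(Q z), ⨆ x : K, ∑' t, pKz Q (Γ (x, z')) z' (f t) ≤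
        β⁻¹ * ∑' t, ⨆ x : K, |f (t + 1) x z'| := by
  have hi : ∀ t, Integrable (fun z' => ⨆ x : K, |f (t + 1) x z'|) (Q z) :=
    fun t => (hf (t + 1)).2 K hK z
  have h0 : ∀ t z', 0 ≤ ⨆ x : K, |f (t + 1) x z'| :=
    fun _ _ => Real.iSup_nonneg fun _ => abs_nonneg _
  have hsum := (summable_nat_add_iff 1).2 (hs K hK z)
  refine ⟨integrable_tsum_of_nonneg hi h0 hsum, ?_⟩
  filter_upwards [ae_summable_of_nonneg hi h0 hsum] with z' hz'
  exact iSup_tsum_pKz_le hβ hΓc hf hs hrec hK hz'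

lemma integral_iSup_tsum_pKz_le (hβ : 0 < β) (hΓc : ∀ p, IsCompact (Γ p))
    (hf : ∀ t, MemL1C X Z Q (f t)) (hs : ∀ K, IsCompact K → ∀ z, Summable fun t => pKz Q K z (f t))
    (hrec : ∀ t x z, β * pKz Q (Γ (x, z)) z (f t) ≤ f (t + 1) x z) {K : Set X} (hK : IsCompact K)
    (z : Z) :
    β * ∫ z', (⨆ x : K, ∑' t, pKz Q (Γ (x, z')) z' (f t)) ∂(Q z) ≤
      ∑' t, pKz Q K z (f (t + 1)) := by
  obtain ⟨hint, hle⟩ := integrable_and_ae_iSup_tsum_pKz_le hβ hΓc hf hs hrec hK z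
  calc β * ∫ z', (⨆ x : K, ∑' t, pKz Q (Γ (x, z')) z' (f t)) ∂(Q z)
      ≤ β * ∫ z', β⁻¹ * ∑' t, ⨆ x : K, |f (t + 1) x z'| ∂(Q z) :=
        mul_le_mul_of_nonneg_left (integral_mono_of_nonneg (ae_of_all _ fun _ =>
          Real.iSup_nonneg fun _ => tsum_nonneg fun _ => pKz_nonneg _ _ _)
          (hint.const_mul _) hle) hβ.le
    _ = ∑' t, pKz Q K z (f (t + 1)) := by
        rw [integral_const_mul, mul_inv_cancel_left₀ hβ.ne', integral_tsum_of_nonneg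
          (fun t => (hf (t + 1)).2 K hK z) (fun _ _ => Real.iSup_nonneg fun _ => abs_nonneg _)
          ((summable_nat_add_iff 1).2 (hs K hK z))]
        rfl

lemma integrable_iSup_abs_tsum_pKz (hβ : 0 < β) (hΓc : ∀ p, IsCompact (Γ p))
    (hf : ∀ t, MemL1C X Z Q (f t)) (hs : ∀ K, IsCompact K → ∀ z, Summable fun t => pKz Q K z (f t))
    (hrec : ∀ t x z, β * pKz Q (Γ (x, z)) z (f t) ≤ f (t + 1) x z)
    (hR : Cara fun x z => ∑' t, pKz Q (Γ (x, z)) z (f t)) {K : Set X} (hK : IsCompact K)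
    (z : Z) :
    Integrable (fun z' => ⨆ x : K, |∑' t, pKz Q (Γ (x, z')) z' (f t)|) (Q z) := by
  obtain ⟨hint, hle⟩ := integrable_and_ae_iSup_tsum_pKz_le hβ hΓc hf hs hrec hK z
  refine (hint.const_mul β⁻¹).mono' (measurable_iSup_of_continuous
    (f := fun (x : K) z' => |∑' t, pKz Q (Γ (x, z')) z' (f t)|)
    (fun z' => continuous_abs.comp ((hR.2 z').comp continuous_subtype_val))
    (fun x => (hR.1 x).abs)).aestronglyMeasurable ?_
  filter_upwards [hle] with z' hz'
  rw [Real.norm_of_nonneg (Real.iSup_nonneg fun _ => abs_nonneg _)]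
  simpa only [abs_of_nonneg (tsum_nonneg fun _ => pKz_nonneg _ _ _)] using hz'

end Bellman

theorem stmt13_general {l k : ℕ} (X : Set (Euc l)) (Z : Set (Euc k))
    (β : ℝ) (hβ0 : 0 < β)
    (Q : Z → Measure Z) (hQ : ∀ z, IsProbabilityMeasure (Q z))
    (hQmeas : ∀ B : Set Z, MeasurableSet B → Measurable fun z => (Q z B).toReal)
    (Γ : X × Z → Set X)
    (hΓne : ∀ p, (Γ p).Nonempty) (hΓcpt : ∀ p, IsCompact (Γ p))
    (hΓu : UHC Γ) (hΓl : LHC Γ)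
    -- (B6)
    (lfam : ℕ → X → Z → ℝ)
    (hl_nonneg : ∀ t x z, 0 ≤ lfam t x z)
    (hl_mem : ∀ t, MemL1C X Z Q (lfam t))
    (hl_rec : ∀ t x z,
      β * ∫ z', (⨆ y : Γ (x, z), lfam t y z') ∂(Q z) ≤ lfam (t+1) x z)
    (hl_sum : ∀ K : Set X, IsCompact K → ∀ z : Z,
      Summable fun t => pKz Q K z (lfam t)) :
    -- the Bellman COP
    (∀ K : Set X, IsCompact K → ∀ z : Z,
      Summable fun t =>
        (fun p : Set X → Z → ℝ => fun K z =>
            β * ∫ z', (⨆ x : K, p (Γ ((x : X), z')) z') ∂(Q z))^[t]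
          (fun K z => pKz Q K z (lfam 0)) K z) ∧
    MemL1C X Z Q (fun x z => ∑' t, pKz Q (Γ (x, z)) z (lfam t)) ∧
    (∀ K : Set X, IsCompact K → ∀ z : Z,
      pKz Q K z (lfam 0) +
        β * ∫ z', (⨆ x : K, ∑' t, pKz Q (Γ ((x : X), z')) z' (lfam t)) ∂(Q z) ≤
      ∑' t, pKz Q K z (lfam t)) := by
  have hrec : ∀ t x z, β * pKz Q (Γ (x, z)) z (lfam t) ≤ lfam (t + 1) x z := fun t x z => by
    rw [pKz_eq_integral_iSup (hl_nonneg t)]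
    exact hl_rec t x z
  have hR := cara_tsum_pKz_comp (Measure.measurable_of_measurable_toReal hQmeas) hΓu hΓl hΓne
    hΓcpt hl_mem hl_sum
  refine ⟨fun K hK z => ?_, ⟨hR, fun K hK z => ?_⟩, fun K hK z => ?_⟩
  · exact Summable.of_nonneg_of_le
      (fun t => bellmanOp_iterate_nonneg hβ0.le (fun _ _ => pKz_nonneg _ _ _) t K z)
      (fun t => bellmanOp_iterate_le_pKz hβ0.le hΓcpt hl_mem hrec t K hK z) (hl_sum K hK z)
  · exact integrable_iSup_abs_tsum_pKz hβ0 hΓcpt hl_mem hl_sum hrec hR hK z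
  · rw [(hl_sum K hK z).tsum_eq_zero_add]
    exact add_le_add_right (integral_iSup_tsum_pKz_le hβ0 hΓcpt hl_mem hl_sum hrec hK z) _

/-- Lemma (rt_family): under (B1)-(B6), with `p^{l₀}(K,z) = p_{K,z}(l₀)` and the Bellman
contraction-operator `(Lp)(K,z) = β ∫ max_{x∈K} p(Γ(x,z'),z') dQ_z`:
(1) `Σ_t (L^t p^{l₀})(K,z) < ∞` for all compact `K` and `z`;
(2) `R₀[Γ] ∈ ℒ¹(Z;C(X))` and `p^{l₀} + L R₀ ≤ R₀`, where `R₀(K,z) = Σ_t p_{K,z}(l_t)`. -/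
theorem stmt13 {l k : ℕ} (X : Set (Euc l)) (Z : Set (Euc k))
    (hX : MeasurableSet X) (hZ : MeasurableSet Z)
    (β : ℝ) (hβ0 : 0 < β) (hβ1 : β < 1)
    (Q : Z → Measure Z) (hQ : ∀ z, IsProbabilityMeasure (Q z))
    (hQmeas : ∀ B : Set Z, MeasurableSet B → Measurable fun z => (Q z B).toReal)
    (Γ : X × Z → Set X)
    (hΓne : ∀ p, (Γ p).Nonempty) (hΓcpt : ∀ p, IsCompact (Γ p))
    (hΓu : UHC Γ) (hΓl : LHC Γ)
    (U : X → X → Z → ℝ)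
    (hUmeas : ∀ x y, Measurable (U x y))
    (hUcont : ∀ z : Z, Continuous fun p : X × X => U p.1 p.2 z)
    -- (B6)
    (lfam : ℕ → X → Z → ℝ)
    (hl_nonneg : ∀ t x z, 0 ≤ lfam t x z)
    (hl_mem : ∀ t, MemL1C X Z Q (lfam t))
    (hl0 : ∀ x z, |⨆ y : Γ (x, z), U x y z| ≤ lfam 0 x z)
    (hl_rec : ∀ t x z,
      β * ∫ z', (⨆ y : Γ (x, z), lfam t y z') ∂(Q z) ≤ lfam (t+1) x z)
    (hl_sum : ∀ K : Set X, IsCompact K → ∀ z : Z,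
      Summable fun t => pKz Q K z (lfam t)) :
    -- the Bellman COP
    (∀ K : Set X, IsCompact K → ∀ z : Z,
      Summable fun t =>
        (fun p : Set X → Z → ℝ => fun K z =>
            β * ∫ z', (⨆ x : K, p (Γ ((x : X), z')) z') ∂(Q z))^[t]
          (fun K z => pKz Q K z (lfam 0)) K z) ∧
    MemL1C X Z Q (fun x z => ∑' t, pKz Q (Γ (x, z)) z (lfam t)) ∧
    (∀ K : Set X, IsCompact K → ∀ z : Z,
      pKz Q K z (lfam 0) +
        β * ∫ z', (⨆ x : K, ∑' t, pKz Q (Γ ((x : X), z')) z' (lfam t)) ∂(Q z) ≤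
      ∑' t, pKz Q K z (lfam t)) :=
  stmt13_general X Z β hβ0 Q hQ hQmeas Γ hΓne hΓcpt hΓu hΓl lfam hl_nonneg hl_mem hl_rec hl_sum
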